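/- arXiv:1403.2058 — 2 statements merged into one kernel-verified Lean document; each statement's English description precedes it below -/
import Mathlib

section
/- Let φ: X → X be a homeomorphism of a topological space, A: X × ℝ → X × ℝ defined by A(x,s) = (φ_s(x), s) for a family (φ_s) with φ_0 = id and φ_{s+1} = φ_s ∘ φ, R_t(x,s) := (x, s+t), and B(x,s) := (φ^{-1}(x), s+1). If σ̃ is a Borel measure on X × ℝ invariant under g̃_t := A ∘ R_t ∘ A^{-1} for all t, then σ̃ = A_* (m ⊗ ds) for some Borel measure m on X; moreover σ̃ is R_1-invariant if and only if B_*(m ⊗ ds) = m ⊗ ds, which holds if and only if m is φ-invariant. -/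
/-!
Pulling `σ` back by `A` conjugates the flow `g̃_t` to the vertical translations `R_t`, so
`ν := A⁻¹_* σ` is `R_t`-invariant. Such a measure is `m ⊗ ds` with `m E := ν (E × [0,1))`: for
measurable `T`, the set `{(t, p) | p ∈ T, p.2 - t ∈ [0,1)}` has the same `ds ⊗ ν`-measure as its
preimage under the shear `(t, p) ↦ (t, R_t p)`, and Tonelli evaluates the first as `ν T` and the
second as `∫ ds(T_x) dm`. The `σ`-finiteness of `m` follows from that of `m ⊗ ds` by Markov's
inequality for the slice measures `x ↦ ds(T_x)` of a finite-measure exhaustion. Finally `R_1 ∘ A = A ∘ B` and `B_*(m ⊗ ds) = (φ⁻¹_* m) ⊗ ds`.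
-/

open MeasureTheory Filter Set Topology
open scoped ENNReal

theorem MeasurableEquiv.map_map_eq_iff_of_semiconj {α β : Type*} [MeasurableSpace α]
    [MeasurableSpace β] (e : α ≃ᵐ β) {f : β → β} {g : α → α} (hf : Measurable f) (hg : Measurable g)
    (h : Function.Semiconj e g f) (μ : Measure α) :
    (μ.map e).map f = μ.map e ↔ μ.map g = μ := by
  rw [Measure.map_map hf e.measurable, ← h.comp_eq, ← Measure.map_map e.measurable hg,
    e.map_measurableEquiv_injective.eq_iff]

namespace MeasureTheory.Measure

variable {α β X : Type*} [MeasurableSpace α] [MeasurableSpace β] [MeasurableSpace X]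

theorem sigmaFinite_of_sigmaFinite_prod {μ : Measure α} {ν : Measure β} [SFinite ν] [NeZero ν]
    [SigmaFinite (μ.prod ν)] : SigmaFinite μ := by
  set T := spanningSets (μ.prod ν)
  set g : ℕ → α → ℝ≥0∞ := fun n x => ν (Prod.mk x ⁻¹' T n)
  have hg : ∀ n, Measurable (g n) := fun n =>
    measurable_measure_prodMk_left (measurableSet_spanningSets _ n)
  set E : ℕ × ℕ → Set α := fun nk => {x | 1 ≤ nk.2 * g nk.1 x}
  refine sigmaFinite_of_countable (countable_range E) ?_ ?_
  · rintro _ ⟨⟨n, k⟩, rfl⟩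
    calc μ (E (n, k)) ≤ ∫⁻ x, k * g n x ∂μ := by
          simpa using mul_meas_ge_le_lintegral₀ ((hg n).const_mul k).aemeasurable 1
      _ = k * μ.prod ν (T n) := by
          rw [lintegral_const_mul _ (hg n), prod_apply (measurableSet_spanningSets _ n)]
      _ < ∞ := ENNReal.mul_lt_top (ENNReal.natCast_lt_top k) (measure_spanningSets_lt_top _ n)
  · refine eq_univ_of_forall fun x => ?_
    obtain ⟨n, hn⟩ : ∃ n, g n x ≠ 0 := by
      by_contra! h
      have hx : ν (⋃ n, Prod.mk x ⁻¹' T n) = 0 := measure_iUnion_null h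
      rw [← preimage_iUnion, iUnion_spanningSets, preimage_univ, measure_univ_eq_zero] at hx
      exact NeZero.ne ν hx
    obtain ⟨k, hk⟩ := ENNReal.exists_nat_mul_gt hn ENNReal.one_ne_top
    exact ⟨_, ⟨(n, k), rfl⟩, hk.le⟩

theorem prod_left_injective {ν : Measure β} [SFinite ν] {t : Set β} (ht₀ : ν t ≠ 0)
    (ht : ν t ≠ ∞) : Function.Injective fun μ : Measure α => μ.prod ν := by
  intro μ₁ μ₂ h
  ext s -
  have hst := congrArg (· (s ×ˢ t)) h
  simpa only [prod_prod, ENNReal.mul_left_inj ht₀ ht] using hst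

noncomputable def slabMarginal (ν : Measure (X × ℝ)) : Measure X :=
  (ν.restrict (univ ×ˢ Ico 0 1)).map Prod.fst

theorem measurePreserving_shear {ν : Measure (X × ℝ)} [SFinite ν]
    (hν : ∀ t : ℝ, ν.map (fun p : X × ℝ => (p.1, p.2 + t)) = ν) :
    MeasurePreserving (fun q : ℝ × (X × ℝ) => (q.1, (q.2.1, q.2.2 + q.1)))
      (volume.prod ν) (volume.prod ν) :=
  (MeasurePreserving.id volume).skew_product (by fun_prop) (ae_of_all _ hν)

theorem lintegral_measure_slice_slabMarginal {ν : Measure (X × ℝ)} [SFinite ν]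
    (hν : ∀ t : ℝ, ν.map (fun p : X × ℝ => (p.1, p.2 + t)) = ν)
    {T : Set (X × ℝ)} (hT : MeasurableSet T) :
    ∫⁻ x, volume (Prod.mk x ⁻¹' T) ∂ν.slabMarginal = ν T := by
  set S : Set (X × ℝ) := univ ×ˢ Ico 0 1
  set Z : Set (ℝ × (X × ℝ)) := {q | q.2 ∈ T ∧ q.2.2 - q.1 ∈ Ico 0 1}
  have hZ : MeasurableSet Z := (measurable_snd hT).inter (measurableSet_Ico.preimage (by fun_prop))
  have hslice_sheared : ∀ p : X × ℝ, volume ((fun t : ℝ => (t, p.1, p.2 + t)) ⁻¹' Z) =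
      S.indicator (fun p => volume (Prod.mk p.1 ⁻¹' T)) p := by
    intro p
    by_cases hp : p ∈ S
    · have : (fun t : ℝ => (t, p.1, p.2 + t)) ⁻¹' Z = (p.2 + ·) ⁻¹' (Prod.mk p.1 ⁻¹' T) := by
        ext t
        simp_all [Z, S]
      rw [indicator_of_mem hp, this, measure_preimage_add]
    · have : (fun t : ℝ => (t, p.1, p.2 + t)) ⁻¹' Z = ∅ := by
        ext t
        simp_all [Z, S]
      rw [indicator_of_notMem hp, this, measure_empty]
  have hslice_T : ∀ p : X × ℝ, volume ((fun t : ℝ => (t, p)) ⁻¹' Z) = T.indicator 1 p := by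
    intro p
    by_cases hp : p ∈ T
    · have : (fun t : ℝ => (t, p)) ⁻¹' Z = Ioc (p.2 - 1) p.2 := by
        ext t
        simp only [mem_preimage, mem_ofPred_eq, hp, true_and, mem_Ico, mem_Ioc, Z]
        constructor <;> intro h <;> constructor <;> linarith [h.1, h.2]
      simp [this, hp]
    · have : (fun t : ℝ => (t, p)) ⁻¹' Z = ∅ := by
        ext t
        simp [Z, hp]
      simp [this, hp]
  calc ∫⁻ x, volume (Prod.mk x ⁻¹' T) ∂ν.slabMarginal
      = ∫⁻ p, S.indicator (fun p => volume (Prod.mk p.1 ⁻¹' T)) p ∂ν := by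
        rw [slabMarginal, lintegral_map (measurable_measure_prodMk_left hT) measurable_fst,
          lintegral_indicator (MeasurableSet.univ.prod measurableSet_Ico)]
    _ = volume.prod ν ((fun q : ℝ × (X × ℝ) => (q.1, (q.2.1, q.2.2 + q.1))) ⁻¹' Z) := by
        rw [prod_apply_symm ((measurable_fst.prodMk (by fun_prop)) hZ)]
        exact lintegral_congr fun p => (hslice_sheared p).symm
    _ = volume.prod ν Z := (measurePreserving_shear hν).measure_preimage hZ.nullMeasurableSet
    _ = ν T := by
        rw [prod_apply_symm hZ]
        simp_rw [hslice_T, lintegral_indicator_one hT]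

theorem eq_slabMarginal_prod_volume {ν : Measure (X × ℝ)} [SFinite ν]
    (hν : ∀ t : ℝ, ν.map (fun p : X × ℝ => (p.1, p.2 + t)) = ν) :
    ν = ν.slabMarginal.prod volume := by
  ext T hT
  rw [prod_apply hT, lintegral_measure_slice_slabMarginal hν hT]

theorem exists_sigmaFinite_eq_prod_volume {ν : Measure (X × ℝ)} [SigmaFinite ν]
    (hν : ∀ t : ℝ, ν.map (fun p : X × ℝ => (p.1, p.2 + t)) = ν) :
    ∃ m : Measure X, SigmaFinite m ∧ ν = m.prod volume := by
  have hνm := eq_slabMarginal_prod_volume hν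
  have : SigmaFinite (ν.slabMarginal.prod (volume : Measure ℝ)) := by rw [← hνm]; infer_instance
  exact ⟨_, sigmaFinite_of_sigmaFinite_prod (ν := (volume : Measure ℝ)), hνm⟩

theorem map_prodMap_add_prod_volume_eq_self_iff {m : Measure X} [SFinite m] {f : X → X}
    (hf : Measurable f) (c : ℝ) :
    (m.prod volume).map (Prod.map f (· + c)) = m.prod volume ↔ m.map f = m := by
  rw [← map_prod_map _ _ hf (measurable_add_const c), map_add_right_eq_self,
    (prod_left_injective (t := Ico (0 : ℝ) 1) (by simp) (by simp)).eq_iff]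

end MeasureTheory.Measure

open Measure

theorem stmt10_general {X : Type*} [TopologicalSpace X] [MeasurableSpace X] [BorelSpace X]
    (φ : X ≃ₜ X) (φs : ℝ → X ≃ₜ X)
    (hper : ∀ s : ℝ, φs (s + 1) = φ.trans (φs s))
    (A : (X × ℝ) ≃ₜ (X × ℝ))
    (hA : ∀ p : X × ℝ, A p = (φs p.2 p.1, p.2))
    (σ : Measure (X × ℝ)) [SigmaFinite σ]
    (hinv : ∀ t : ℝ,
      Measure.map (fun p : X × ℝ => A ((A.symm p).1, (A.symm p).2 + t)) σ = σ) :
    ∃ m : Measure X, SigmaFinite m ∧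
      σ = Measure.map A (m.prod volume) ∧
      ((Measure.map (fun p : X × ℝ => (p.1, p.2 + 1)) σ = σ) ↔
        Measure.map (fun p : X × ℝ => (φ.symm p.1, p.2 + 1)) (m.prod volume)
          = m.prod volume) ∧
      ((Measure.map (fun p : X × ℝ => (φ.symm p.1, p.2 + 1)) (m.prod volume)
          = m.prod volume) ↔
        Measure.map φ m = m) := by
  set ν := σ.map A.symm
  have hσ : σ = ν.map A := (A.toMeasurableEquiv.map_map_symm (ν := σ)).symm
  have hν : ∀ t : ℝ, ν.map (fun p : X × ℝ => (p.1, p.2 + t)) = ν := fun t =>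
    (A.symm.toMeasurableEquiv.map_map_eq_iff_of_semiconj (by fun_prop) (by fun_prop)
      (fun p => by simp) σ).2 (hinv t)
  have : SigmaFinite ν := A.symm.toMeasurableEquiv.sigmaFinite_map
  obtain ⟨m, hm, hνm⟩ := exists_sigmaFinite_eq_prod_volume hν
  have hshift : Function.Semiconj A (fun p : X × ℝ => (φ.symm p.1, p.2 + 1))
      (fun p : X × ℝ => (p.1, p.2 + 1)) := fun p => by simp [hA, hper]
  refine ⟨m, hm, hνm ▸ hσ, ?_, ?_⟩
  · rw [hσ, hνm]
    exact A.toMeasurableEquiv.map_map_eq_iff_of_semiconj (by fun_prop) (by fun_prop) hshift _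
  · exact (map_prodMap_add_prod_volume_eq_self_iff φ.symm.measurable 1).trans
      (φ.toMeasurableEquiv.map_apply_eq_iff_map_symm_apply_eq.trans eq_comm).symm

/-- Decomposition of a suspension-flow-invariant measure on `X × ℝ`: if `σ` is invariant
under `g̃_t = A ∘ R_t ∘ A⁻¹` for all `t`, where `A(x,s) = (φ_s x, s)` for an isotopy with
`φ₀ = id`, `φ_{s+1} = φ_s ∘ φ`, then `σ = A_*(m ⊗ ds)`; moreover `σ` is `R₁`-invariant iff
`B_*(m ⊗ ds) = m ⊗ ds` (with `B(x,s) = (φ⁻¹ x, s+1)`), which holds iff `m` is `φ`-invariant. -/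
theorem stmt10 {X : Type*} [TopologicalSpace X] [MeasurableSpace X] [BorelSpace X]
    (φ : X ≃ₜ X) (φs : ℝ → X ≃ₜ X)
    (h0 : φs 0 = Homeomorph.refl X)
    (hper : ∀ s : ℝ, φs (s + 1) = φ.trans (φs s))
    (A : (X × ℝ) ≃ₜ (X × ℝ))
    (hA : ∀ p : X × ℝ, A p = (φs p.2 p.1, p.2))
    (σ : Measure (X × ℝ)) [SigmaFinite σ]
    (hinv : ∀ t : ℝ,
      Measure.map (fun p : X × ℝ => A ((A.symm p).1, (A.symm p).2 + t)) σ = σ) :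
    ∃ m : Measure X, SigmaFinite m ∧
      σ = Measure.map A (m.prod volume) ∧
      ((Measure.map (fun p : X × ℝ => (p.1, p.2 + 1)) σ = σ) ↔
        Measure.map (fun p : X × ℝ => (φ.symm p.1, p.2 + 1)) (m.prod volume)
          = m.prod volume) ∧
      ((Measure.map (fun p : X × ℝ => (φ.symm p.1, p.2 + 1)) (m.prod volume)
          = m.prod volume) ↔
        Measure.map φ m = m) :=
  stmt10_general φ φs hper A hA σ hinv
end

section
/- Let α: ℝⁿ → ℝ be locally Lipschitz and suppose that for every λ and every η ∈ ∂_c α(λ) there is an invariant measure μ_{λ,η} with ρ(μ_{λ,η}) = η. If a₁, a₂ ∈ ℝⁿ satisfy α(a₂) − α(a₁) ≥ 1, then there exists an invariant measure μ with ⟨ρ(μ), a₂ − a₁⟩ ≥ 1. -/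
/-!
Lebourg's mean value inequality, by averaging. For `F` Lipschitz and a small ball `B` around `a`,
`ψ(t) = ∫_B F(x + t(b - a)) dx` has right derivative `∫_B ⟨∇F(x + t(b - a)), b - a⟩ dx` (`∇F`
exists a.e. by Rademacher's theorem), while `ψ(1) - ψ(0) ≈ (F b - F a) vol B`; so some point `u`
near `[a, b]` where `F` is differentiable has `⟨∇F(u), b - a⟩ > F b - F a - ε`. Take for `F` a
Lipschitz extension of `α` from a compact neighbourhood of `[a, b]` and let `ε → 0`: the points `u`
and the bounded gradients `∇α(u)` converge along a subsequence to some `l` and `η ∈ ∂_c α(l)` with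
`α b - α a ≤ ⟨η, b - a⟩`, and the hypothesis realises `η` as `ρ(μ)`.
-/

open MeasureTheory Filter Set Topology RealInnerProductSpace Metric
open scoped NNReal

/-- The Clarke subdifferential of a (locally Lipschitz) function: the convex hull of all
limits of gradients at nearby points of differentiability. -/
def clarkeSubdiff {n : ℕ} (f : EuclideanSpace ℝ (Fin n) → ℝ)
    (a : EuclideanSpace ℝ (Fin n)) : Set (EuclideanSpace ℝ (Fin n)) :=
  convexHull ℝ {v | ∃ u : ℕ → EuclideanSpace ℝ (Fin n),
    (∀ k, DifferentiableAt ℝ f (u k)) ∧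
    Tendsto u atTop (𝓝 a) ∧
    Tendsto (fun k => gradient f (u k)) atTop (𝓝 v)}

section

variable {E : Type*} [NormedAddCommGroup E] [NormedSpace ℝ E] {F : E → ℝ} {K : ℝ≥0}

theorem isCompact_segment (a b : E) : IsCompact (segment ℝ a b) :=
  convexHull_pair (𝕜 := ℝ) a b ▸ (toFinite {a, b}).isCompact_convexHull ℝ

section Averaging

variable [FiniteDimensional ℝ E] [MeasurableSpace E] [BorelSpace E] {μ : Measure E}
  [μ.IsAddHaarMeasure]

theorem LipschitzWith.hasDerivWithinAt_setIntegral_comp_add_smul (hF : LipschitzWith K F)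
    {s : Set E} (hs : IsCompact s) (v : E) (t : ℝ) :
    HasDerivWithinAt (fun τ ↦ ∫ x in s, F (x + τ • v) ∂μ)
      (∫ x in s, lineDeriv ℝ F (x + t • v) v ∂μ) (Ici t) t := by
  have hFt : LipschitzWith K (fun x ↦ F (x + t • v)) := by
    simpa [Function.comp_def] using hF.comp (isometry_add_right (t • v)).lipschitz
  have hind (f : E → ℝ) : ∫ x, f x * s.indicator 1 x ∂μ = ∫ x in s, f x ∂μ := by
    rw [← integral_indicator hs.measurableSet]
    congr 1 with x
    by_cases hx : x ∈ s <;> simp [hx]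
  have hline (x : E) : lineDeriv ℝ (fun y ↦ F (y + t • v)) x v = lineDeriv ℝ F (x + t • v) v := by
    simp only [lineDeriv, add_right_comm x _ (t • v)]
  have key := hFt.integral_inv_smul_sub_mul_tendsto_integral_lineDeriv_mul
    ((integrable_indicator_iff hs.measurableSet).2 (integrableOn_const hs.measure_ne_top) :
      Integrable (s.indicator 1) μ) v
  simp only [hind, hline] at key
  have hmap : 𝓝[>] t = map (t + ·) (𝓝[>] 0) := by simp
  rw [hasDerivWithinAt_iff_tendsto_slope, Ici_sdiff_left, hmap, tendsto_map'_iff]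
  refine key.congr' ?_
  filter_upwards with h
  have hint (τ : ℝ) : IntegrableOn (fun x ↦ F (x + τ • v)) s μ :=
    (hF.continuous.comp (continuous_add_const (τ • v))).continuousOn.integrableOn_compact hs
  rw [Function.comp_apply, slope_def_field, add_sub_cancel_left, ← integral_sub (hint _) (hint _),
    integral_smul, smul_eq_mul, inv_mul_eq_div]
  simp_rw [add_assoc, ← add_smul, add_comm h t]

theorem LipschitzWith.setIntegral_sub_le_of_lineDeriv_le (hF : LipschitzWith K F) {s : Set E}
    (hs : IsCompact s) (v : E) {m : ℝ}
    (hm : ∀ t ∈ Ico (0 : ℝ) 1, ∀ᵐ x ∂μ.restrict s, lineDeriv ℝ F (x + t • v) v ≤ m) :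
    ∫ x in s, (F (x + v) - F x) ∂μ ≤ m * μ.real s := by
  set ψ : ℝ → ℝ := fun τ ↦ ∫ x in s, F (x + τ • v) ∂μ
  have hψ : Continuous ψ := by
    have := hF.continuous
    exact continuous_parametric_integral_of_continuous (by fun_prop) hs
  have hderiv (t : ℝ) (ht : t ∈ Ico (0 : ℝ) 1) :
      ∫ x in s, lineDeriv ℝ F (x + t • v) v ∂μ ≤ m * μ.real s := by
    have hderiv_int : IntegrableOn (fun x ↦ lineDeriv ℝ F (x + t • v) v) s μ :=
      Measure.integrableOn_of_bounded hs.measure_ne_top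
        ((measurable_lineDeriv hF.continuous).comp (measurable_add_const _)).aestronglyMeasurable
        (ae_of_all _ fun x ↦ norm_lineDeriv_le_of_lipschitz ℝ hF)
    calc ∫ x in s, lineDeriv ℝ F (x + t • v) v ∂μ ≤ ∫ _ in s, m ∂μ :=
          setIntegral_mono_ae_restrict hderiv_int (integrableOn_const hs.measure_ne_top) (hm t ht)
      _ = m * μ.real s := by rw [setIntegral_const, smul_eq_mul, mul_comm]
  have hψ_le := image_le_of_deriv_right_le_deriv_boundary hψ.continuousOn
    (fun t _ ↦ hF.hasDerivWithinAt_setIntegral_comp_add_smul hs v t)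
    (B := fun τ ↦ ψ 0 + m * μ.real s * τ) (by simp) (by fun_prop)
    (fun t _ ↦ ((hasDerivAt_id t).const_mul _ |>.const_add _).hasDerivWithinAt)
    (fun t ht ↦ by simpa using hderiv t ht) (right_mem_Icc.2 zero_le_one)
  have hint (τ : ℝ) : IntegrableOn (fun x ↦ F (x + τ • v)) s μ :=
    (hF.continuous.comp (continuous_add_const (τ • v))).continuousOn.integrableOn_compact hs
  rw [integral_sub (by simpa [IntegrableOn] using hint 1) (by simpa [IntegrableOn] using hint 0)]
  simp only [ψ, one_smul, zero_smul, add_zero, mul_one] at hψ_le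
  linarith

end Averaging

variable [FiniteDimensional ℝ E]

theorem LipschitzWith.exists_differentiableAt_fderiv_gt (hF : LipschitzWith K F) (a v : E)
    {ε r : ℝ} (hε : 0 < ε) (hr : 0 < r) :
    ∃ u ∈ thickening r (segment ℝ a (a + v)), DifferentiableAt ℝ F u ∧
      F (a + v) - F a - ε < fderiv ℝ F u v := by
  borelize E
  by_contra! hle
  obtain ⟨δ₀, hδ₀, hδ₀ε⟩ := exists_pos_mul_lt hε (2 * K)
  set δ := min δ₀ (r / 2)
  have hδ : 0 < δ := lt_min hδ₀ (half_pos hr)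
  have hδε : 2 * K * δ < ε :=
    (mul_le_mul_of_nonneg_left (min_le_left _ _) (by positivity)).trans_lt hδ₀ε
  set B := closedBall a δ
  have hB : IsCompact B := isCompact_closedBall a δ
  let μ : Measure E := Measure.addHaar
  have htube (x : E) (hx : x ∈ B) (t : ℝ) (ht : t ∈ Ico (0 : ℝ) 1) :
      x + t • v ∈ thickening r (segment ℝ a (a + v)) := by
    refine mem_thickening_iff.2 ⟨a + t • v, ?_, ?_⟩
    · rw [segment_eq_image']
      exact ⟨t, Ico_subset_Icc_self ht, by rw [add_sub_cancel_left]⟩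
    · rw [dist_add_right]
      exact (mem_closedBall.1 hx).trans_lt ((min_le_right _ _).trans_lt (half_lt_self hr))
  have hupper := hF.setIntegral_sub_le_of_lineDeriv_le (μ := μ) hB v
    (m := F (a + v) - F a - ε) fun t ht ↦ by
      filter_upwards [ae_restrict_mem hB.measurableSet, ae_restrict_of_ae
        ((measurePreserving_add_right μ (t • v)).quasiMeasurePreserving.tendsto_ae.eventually
          hF.ae_differentiableAt)] with x hxB hdiff
      rw [hdiff.lineDeriv_eq_fderiv]
      exact hle _ (htube x hxB t ht) hdiff
  have hlower : (F (a + v) - F a - 2 * K * δ) * μ.real B ≤ ∫ x in B, (F (x + v) - F x) ∂μ := by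
    refine setIntegral_ge_of_const_le_real hB.measurableSet hB.measure_ne_top (fun x hx ↦ ?_)
      (((hF.continuous.comp (continuous_add_const v)).sub hF.continuous).continuousOn
        |>.integrableOn_compact hB)
    have h₁ := hF.dist_le_mul (x + v) (a + v)
    have h₂ := hF.dist_le_mul x a
    rw [dist_add_right] at h₁
    have hKδ : K * dist x a ≤ K * δ := mul_le_mul_of_nonneg_left (mem_closedBall.1 hx) K.2
    rw [Real.dist_eq, abs_le] at h₁ h₂
    linarith [h₁.1, h₂.2]
  have hμB : 0 < μ.real B :=
    ENNReal.toReal_pos (measure_closedBall_pos μ a hδ).ne' hB.measure_ne_top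
  nlinarith

theorem LocallyLipschitz.exists_forall_exists_differentiableAt_fderiv_gt {α : E → ℝ}
    (hα : LocallyLipschitz α) (a b : E) :
    ∃ K : ℝ≥0, ∀ ε > 0, ∃ u ∈ cthickening 1 (segment ℝ a b), DifferentiableAt ℝ α u ∧
      ‖fderiv ℝ α u‖ ≤ K ∧ α b - α a - ε < fderiv ℝ α u (b - a) := by
  set C := cthickening 1 (segment ℝ a b)
  obtain ⟨K, hK⟩ :=
    hα.locallyLipschitzOn.exists_lipschitzOnWith_of_compact (isCompact_segment a b).cthickening
  obtain ⟨F, hF, hαF⟩ := hK.extend_real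
  refine ⟨K, fun ε hε ↦ ?_⟩
  obtain ⟨u, hu, hdiff, hgt⟩ := hF.exists_differentiableAt_fderiv_gt a (b - a) hε one_pos
  rw [add_sub_cancel] at hu hgt
  have hC : C ∈ 𝓝 u :=
    mem_of_superset (isOpen_thickening.mem_nhds hu) (thickening_subset_cthickening _ _)
  have hαF_u : α =ᶠ[𝓝 u] F := eventually_of_mem hC hαF
  have hseg : segment ℝ a b ⊆ C := self_subset_cthickening _
  refine ⟨u, mem_of_mem_nhds hC, hαF_u.differentiableAt_iff.2 hdiff,
    norm_fderiv_le_of_lipschitzOn ℝ hC hK, ?_⟩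
  rwa [hαF_u.fderiv_eq, hαF (hseg (left_mem_segment ℝ a b)),
    hαF (hseg (right_mem_segment ℝ a b))]

end

theorem exists_mem_clarkeSubdiff_sub_le_inner {n : ℕ} {α : EuclideanSpace ℝ (Fin n) → ℝ}
    (hα : LocallyLipschitz α) (a b : EuclideanSpace ℝ (Fin n)) :
    ∃ l, ∃ η ∈ clarkeSubdiff α l, α b - α a ≤ ⟪η, b - a⟫ := by
  obtain ⟨K, hK⟩ := hα.exists_forall_exists_differentiableAt_fderiv_gt a b
  choose u hu hdiff hbound hgt using fun k : ℕ ↦ hK (1 / (k + 1)) Nat.one_div_pos_of_nat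
  have hgrad (k : ℕ) : fderiv ℝ α (u k) (b - a) = ⟪gradient α (u k), b - a⟫ :=
    InnerProductSpace.toDual_symm_apply.symm
  have hmem (k : ℕ) :
      (u k, gradient α (u k)) ∈ cthickening 1 (segment ℝ a b) ×ˢ closedBall 0 K := by
    refine ⟨hu k, ?_⟩
    simpa [gradient] using hbound k
  obtain ⟨⟨l, η⟩, -, φ, hφ, hlim⟩ :=
    ((isCompact_segment a b).cthickening.prod (isCompact_closedBall 0 K)).tendsto_subseq hmem
  have hgrad_lim := (continuous_snd.tendsto _).comp hlim
  refine ⟨l, η, subset_convexHull ℝ _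
    ⟨u ∘ φ, fun k ↦ hdiff _, (continuous_fst.tendsto _).comp hlim, hgrad_lim⟩, ?_⟩
  have hε_lim : Tendsto (fun k ↦ α b - α a - 1 / ((φ k : ℝ) + 1)) atTop (𝓝 (α b - α a)) := by
    simpa using (tendsto_const_nhds (x := α b - α a)).sub
      (tendsto_one_div_add_atTop_nhds_zero_nat.comp hφ.tendsto_atTop)
  exact le_of_tendsto_of_tendsto' hε_lim (hgrad_lim.inner tendsto_const_nhds)
    fun k ↦ (hgrad (φ k) ▸ hgt (φ k)).le

/-- If every element of every Clarke subdifferential of `α` is the rotation vector of some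
invariant measure, and `α(a₂) − α(a₁) ≥ 1`, then there exists an invariant measure `μ` with
`⟨ρ(μ), a₂ − a₁⟩ ≥ 1`. -/
theorem stmt19 {n : ℕ} {P : Type*} [MeasurableSpace P]
    (α : EuclideanSpace ℝ (Fin n) → ℝ) (hα : LocallyLipschitz α)
    (Inv : Set (Measure P)) (ρ : Measure P → EuclideanSpace ℝ (Fin n))
    (hyp : ∀ l : EuclideanSpace ℝ (Fin n), ∀ η ∈ clarkeSubdiff α l,
      ∃ μ ∈ Inv, ρ μ = η)
    (a₁ a₂ : EuclideanSpace ℝ (Fin n))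
    (h : α a₂ - α a₁ ≥ 1) :
    ∃ μ ∈ Inv, ⟪ρ μ, a₂ - a₁⟫ ≥ 1 := by
  obtain ⟨l, η, hη, hle⟩ := exists_mem_clarkeSubdiff_sub_le_inner hα a₁ a₂
  obtain ⟨μ, hμ, rfl⟩ := hyp l η hη
  exact ⟨μ, hμ, h.trans hle⟩
end
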